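/- arXiv:1812.04413 — 6 statements merged into one kernel-verified Lean document; each statement's English description precedes it below -/
import Mathlib

section
/- Let W be a set and R an Euclidean binary relation on W such that the structure is R-connected. Then every inner world w is reflexive (R w w holds), and the set of all inner worlds forms an R-clique: any two inner worlds w₁, w₂ satisfy R w₁ w₂ and R w₂ w₁. -/
/-!
Euclideanity says that the successors of any world are pairwise related; in particular a world
with a predecessor is reflexive, and a reflexive world `u` is related back to each of its
successors. For such a `u`, the property "every successor of `x` is a successor of `u`" holds at
`u` and is preserved by a step along `R` in either direction, so by connectedness it holds at
every world. Applied to an inner, hence reflexive, world `w` it gives `R u w`, and then `R w u`.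
-/

section Euclidean

variable {W : Type*} {R : W → W → Prop} (hEucl : ∀ x y z : W, R x y → R x z → R y z)
include hEucl

theorem refl_of_euclidean {v w : W} (h : R v w) : R w w :=
  hEucl v w w h h

theorem symm_of_euclidean_of_refl {u y : W} (hu : R u u) (h : R u y) : R y u :=
  hEucl u y u h hu

theorem succ_subset_of_euclidean_of_rel {u x y : W} (hu : R u u)
    (hx : ∀ z, R x z → R u z) (hxy : R x y) : ∀ z, R y z → R u z :=
  fun z hyz => hEucl y u z (symm_of_euclidean_of_refl hEucl hu (hx y hxy)) hyz

theorem succ_subset_of_euclidean_of_rel_rev {u x y : W}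
    (hy : ∀ z, R y z → R u z) (hxy : R x y) : ∀ z, R x z → R u z :=
  fun z hxz => hy z (hEucl x y z hxy hxz)

theorem succ_subset_of_euclidean_of_reflTransGen {u w : W} (hu : R u u)
    (h : Relation.ReflTransGen (fun x y => R x y ∨ R y x) u w) : ∀ z, R w z → R u z := by
  induction h with
  | refl => exact fun _ => id
  | tail _ hstep ih =>
    rcases hstep with hxy | hyx
    · exact succ_subset_of_euclidean_of_rel hEucl hu ih hxy
    · exact succ_subset_of_euclidean_of_rel_rev hEucl ih hyx

end Euclidean

/-- In an `R`-connected Euclidean structure, every inner world is reflexive and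
the set of inner worlds forms an `R`-clique. -/
theorem euclidean_connected_inner_clique {W : Type*} {R : W → W → Prop}
    (hEucl : ∀ x y z : W, R x y → R x z → R y z)
    (hConn : ∀ a b : W, Relation.ReflTransGen (fun x y => R x y ∨ R y x) a b) :
    (∀ w : W, (∃ w' : W, R w' w) → R w w) ∧
    (∀ w₁ w₂ : W, (∃ v : W, R v w₁) → (∃ v : W, R v w₂) → R w₁ w₂ ∧ R w₂ w₁) := by
  refine ⟨fun w ⟨_, h⟩ => refl_of_euclidean hEucl h, ?_⟩
  rintro w₁ w₂ ⟨_, h₁⟩ ⟨_, h₂⟩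
  have hw₁ : R w₁ w₁ := refl_of_euclidean hEucl h₁
  have hw₁₂ : R w₁ w₂ :=
    succ_subset_of_euclidean_of_reflTransGen hEucl hw₁ (hConn w₁ w₂) w₂
      (refl_of_euclidean hEucl h₂)
  exact ⟨hw₁₂, symm_of_euclidean_of_refl hEucl hw₁ hw₁₂⟩
end

section
/- Let W be a set and R a Euclidean binary relation on W such that the structure is R-connected and R is nonempty. Then the composed relation R ∘ R ∘ R⁻¹ is the universal relation on W: for all a, b ∈ W there exist x, y ∈ W with R a x, R x y, and R b y. -/
/-! Successors of a point of a Euclidean relation are pairwise related, and this propagates along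
zig-zag paths: if `a` and `b` are connected, every successor of `a` is `R`-related to every
successor of `b`. Connectedness and a single `R`-edge make `R` serial, so `a` and `b` both have
successors `x` and `y`, and then `R x y`. -/

open Relation

section Euclidean

variable {W : Type*} {R : W → W → Prop} (hEucl : ∀ x y z : W, R x y → R x z → R y z)
include hEucl

theorem euclidean_rel_trans_of_rel_self {x u y : W} (hxx : R x x) (hxu : R x u) (huy : R u y) :
    R x y :=
  hEucl u x y (hEucl x u x hxu hxx) huy

theorem euclidean_exists_rel_of_symmGen {a c : W} (h : SymmGen R a c) : ∃ x, R a x := by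
  rcases h with hac | hca
  · exact ⟨c, hac⟩
  · exact ⟨a, hEucl c a a hca hca⟩

theorem euclidean_rel_of_reflTransGen_symmGen {a b : W} (hab : ReflTransGen (SymmGen R) a b)
    {x y : W} (hax : R a x) (hby : R b y) : R x y := by
  induction hab generalizing y with
  | refl => exact hEucl a x y hax hby
  | @tail c b _ hcb ih =>
    have hxx : R x x := hEucl a x x hax hax
    rcases hcb with hcb | hbc
    · exact euclidean_rel_trans_of_rel_self hEucl hxx (ih hcb) hby
    · exact euclidean_rel_trans_of_rel_self hEucl hxx (ih (hEucl b c c hbc hbc)) (hEucl b c y hbc hby)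

theorem euclidean_exists_rel_of_connected (hConn : ∀ a b : W, ReflTransGen (SymmGen R) a b)
    (hNe : ∃ a b : W, R a b) (a : W) : ∃ x, R a x := by
  obtain ⟨a₀, b₀, h₀⟩ := hNe
  rcases (hConn a a₀).cases_head with rfl | ⟨c, hac, -⟩
  · exact ⟨b₀, h₀⟩
  · exact euclidean_exists_rel_of_symmGen hEucl hac

end Euclidean

/-- In an `R`-connected Euclidean structure with nonempty `R`, the relation
`R ∘ R ∘ R⁻¹` is universal. -/
theorem euclidean_connected_composition_universal {W : Type*} {R : W → W → Prop}
    (hEucl : ∀ x y z : W, R x y → R x z → R y z)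
    (hConn : ∀ a b : W, Relation.ReflTransGen (fun x y => R x y ∨ R y x) a b)
    (hNe : ∃ a b : W, R a b) :
    ∀ a b : W, ∃ x y : W, R a x ∧ R x y ∧ R b y := by
  intro a b
  obtain ⟨x, hax⟩ := euclidean_exists_rel_of_connected hEucl hConn hNe a
  obtain ⟨y, hby⟩ := euclidean_exists_rel_of_connected hEucl hConn hNe b
  exact ⟨x, y, hax, euclidean_rel_of_reflTransGen_symmGen hEucl (hConn a b) hax hby, hby⟩
end

section
/- Let W be a set, R a Euclidean binary relation on W such that the structure is R-connected, let P ⊆ W, and let w₀ ∈ W. Then the following are equivalent: (i) w₀ ∈ P and for all x, y, z ∈ W, if R w₀ x, R x y, and R z y, then z ∈ P; (ii) P = W. (This is the set-theoretic form of the statement that the universal modality is definable as Uφ := φ ∧ ◻◻⊟φ over connected Euclidean frames: w₀ satisfies φ ∧ ◻◻⊟φ iff φ holds at every world.) -/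
/-!
Call `z` visible from `w` if `z = w` or `z` is reached from `w` by an `R`-step, an `R`-step
and an `R⁻¹`-step; then `w` satisfies `φ ∧ ◻◻⊟φ` iff `φ` holds at every world visible from `w`.
In a Euclidean frame every `R`-successor is reflexive, and from this one checks that whenever
`b` and `c` are joined by an `R`-step in either direction, every world visible from `c` is
visible from `b`. By connectedness every world is therefore visible from `w₀`.
-/

namespace Relation

variable {W : Type*} {R : W → W → Prop}

def IsEuclidean (R : W → W → Prop) : Prop :=
  ∀ x y z : W, R x y → R x z → R y z

def visible (R : W → W → Prop) (w : W) : Set W :=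
  insert w {z | ∃ x y, R w x ∧ R x y ∧ R z y}

theorem visible_subset_iff {P : Set W} {w : W} :
    visible R w ⊆ P ↔ w ∈ P ∧ ∀ x y z : W, R w x → R x y → R z y → z ∈ P := by
  simp only [visible, Set.insert_subset_iff, Set.ofPred_subset, forall_exists_index, and_imp]
  exact and_congr_right fun _ => ⟨fun h x y z => h z x y, fun h z x y => h x y z⟩

namespace IsEuclidean

theorem rel_self_of_rel (hR : IsEuclidean R) {x y : W} (hxy : R x y) : R y y :=
  hR x y y hxy hxy

theorem visible_subset_of_rel (hR : IsEuclidean R) {b c : W} (hbc : R b c) :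
    visible R c ⊆ visible R b := by
  have hcc := hR.rel_self_of_rel hbc
  refine Set.insert_subset (Or.inr ⟨c, c, hbc, hcc, hcc⟩) ?_
  rintro z ⟨x, y, hcx, hxy, hzy⟩
  have hcy : R c y := hR x c y (hR c x c hcx hcc) hxy
  exact Or.inr ⟨c, y, hbc, hcy, hzy⟩

theorem visible_subset_of_rel_symm (hR : IsEuclidean R) {b c : W} (hcb : R c b) :
    visible R c ⊆ visible R b := by
  have hbb := hR.rel_self_of_rel hcb
  refine Set.insert_subset (Or.inr ⟨b, b, hbb, hbb, hcb⟩) ?_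
  rintro z ⟨x, y, hcx, hxy, hzy⟩
  exact Or.inr ⟨x, y, hR c b x hcb hcx, hxy, hzy⟩

theorem visible_subset_of_reflTransGen (hR : IsEuclidean R) {a b : W}
    (hab : ReflTransGen (fun x y => R x y ∨ R y x) a b) : visible R b ⊆ visible R a := by
  induction hab with
  | refl => exact subset_rfl
  | tail _ hbc ih =>
    rcases hbc with hbc | hcb
    · exact (hR.visible_subset_of_rel hbc).trans ih
    · exact (hR.visible_subset_of_rel_symm hcb).trans ih

end IsEuclidean

end Relation

/-- Over connected Euclidean frames the universal modality is definable as
`Uφ := φ ∧ ◻◻⊟φ`: with `P` the set of worlds satisfying `φ`, a world `w₀`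
satisfies `φ ∧ ◻◻⊟φ` iff `φ` holds at every world. -/
theorem euclidean_universal_modality_definable {W : Type*} {R : W → W → Prop}
    (hEucl : ∀ x y z : W, R x y → R x z → R y z)
    (hConn : ∀ a b : W, Relation.ReflTransGen (fun x y => R x y ∨ R y x) a b)
    (P : Set W) (w₀ : W) :
    (w₀ ∈ P ∧ ∀ x y z : W, R w₀ x → R x y → R z y → z ∈ P) ↔ (∀ w : W, w ∈ P) := by
  have hR : Relation.IsEuclidean R := hEucl
  rw [← Relation.visible_subset_iff]
  refine ⟨fun hP w => hP ?_, fun hP z _ => hP z⟩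
  exact hR.visible_subset_of_reflTransGen (hConn w₀ w) (Set.mem_insert w _)
end

section
/- Let W be a set and R a transitive Euclidean binary relation on W such that the structure is R-connected. Then every lantern illuminates every inner world: if l ∈ W has no R-predecessor and q ∈ W has an R-predecessor, then R l q holds. -/
/-!
Fix a lantern `l` and follow an `R ∪ R⁻¹`-path from `l` to `q`. Along the path one carries the
invariant that `l` sees every world the current world sees, and sees the current world itself
as soon as it is inner. It holds at `l` because `l` has no predecessor, a forward step keeps it by
transitivity, and a backward step `R c b` keeps it because Euclideanity turns `R c b, R c y` and
`R w c, R w b` (with `R w b` by transitivity) into `R b y` and `R b c`.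
-/

namespace TransEuclidean

variable {W : Type*} {R : W → W → Prop} {l b c : W}

def Dominates (R : W → W → Prop) (l b : W) : Prop :=
  ((∃ w, R w b) → R l b) ∧ ∀ y, R b y → R l y

theorem dominates_self (hl : ∀ w, ¬ R w l) : Dominates R l l :=
  ⟨fun ⟨w, hw⟩ => absurd hw (hl w), fun _ hy => hy⟩

theorem Dominates.of_rel (hTrans : ∀ x y z, R x y → R y z → R x z)
    (h : Dominates R l b) (hbc : R b c) : Dominates R l c :=
  have hlc : R l c := h.2 c hbc
  ⟨fun _ => hlc, fun y hcy => hTrans l c y hlc hcy⟩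

theorem Dominates.of_rel_symm (hTrans : ∀ x y z, R x y → R y z → R x z)
    (hEucl : ∀ x y z, R x y → R x z → R y z)
    (h : Dominates R l b) (hcb : R c b) : Dominates R l c := by
  have hlb : R l b := h.1 ⟨c, hcb⟩
  refine ⟨fun ⟨w, hwc⟩ => ?_, fun y hcy => hTrans l b y hlb (hEucl c b y hcb hcy)⟩
  have hbc : R b c := hEucl w b c (hTrans w c b hwc hcb) hwc
  exact hTrans l b c hlb hbc

theorem dominates_of_reflTransGen (hTrans : ∀ x y z, R x y → R y z → R x z)
    (hEucl : ∀ x y z, R x y → R x z → R y z) (hl : ∀ w, ¬ R w l)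
    (hlb : Relation.ReflTransGen (fun x y => R x y ∨ R y x) l b) : Dominates R l b := by
  induction hlb with
  | refl => exact dominates_self hl
  | tail _ hstep ih =>
    rcases hstep with hbc | hcb
    · exact ih.of_rel hTrans hbc
    · exact ih.of_rel_symm hTrans hEucl hcb

end TransEuclidean

/-- In an `R`-connected transitive Euclidean structure, every lantern illuminates
every inner world. -/
theorem trans_euclidean_lantern_illuminates {W : Type*} {R : W → W → Prop}
    (hTrans : ∀ x y z : W, R x y → R y z → R x z)
    (hEucl : ∀ x y z : W, R x y → R x z → R y z)
    (hConn : ∀ a b : W, Relation.ReflTransGen (fun x y => R x y ∨ R y x) a b)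
    {l q : W} (hl : ∀ w' : W, ¬ R w' l) (hq : ∃ w' : W, R w' q) :
    R l q :=
  (TransEuclidean.dominates_of_reflTransGen hTrans hEucl hl (hConn l q)).1 hq
end

section
/- Let W be a nonempty set and R a Euclidean binary relation on W such that the structure is R-connected. Then R is serial (every world has an R-successor) if and only if W contains at least one inner (i.e., non-lantern) world. -/
/-! Euclideanity makes every `R`-successor reflexive, so every world that is adjacent to another
in `R ∪ R⁻¹` has an `R`-successor; by connectedness, once some world has a successor, every world
is either that world or the endpoint of such an edge. -/

def IsEuclidean {α : Type*} (R : α → α → Prop) : Prop :=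
  ∀ x y z, R x y → R x z → R y z

namespace IsEuclidean

variable {α : Type*} {R : α → α → Prop}

theorem rel_self_of_rel (hR : IsEuclidean R) {x y : α} (h : R x y) : R y y :=
  hR x y y h h

theorem exists_rel_of_adj (hR : IsEuclidean R) {a b : α} (hab : R a b ∨ R b a) :
    ∃ v, R b v := by
  rcases hab with hab | hba
  · exact ⟨b, hR.rel_self_of_rel hab⟩
  · exact ⟨a, hba⟩

theorem exists_rel_of_reflTransGen (hR : IsEuclidean R) {a b : α}
    (hab : Relation.ReflTransGen (fun x y => R x y ∨ R y x) a b) (ha : ∃ v, R a v) :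
    ∃ v, R b v := by
  rcases hab.cases_tail with rfl | ⟨c, -, hcb⟩
  · exact ha
  · exact hR.exists_rel_of_adj hcb

end IsEuclidean

/-- An `R`-connected Euclidean structure on a nonempty set is serial iff it
contains at least one inner (non-lantern) world. -/
theorem euclidean_serial_iff_inner_exists {W : Type*} [Nonempty W] {R : W → W → Prop}
    (hEucl : ∀ x y z : W, R x y → R x z → R y z)
    (hConn : ∀ a b : W, Relation.ReflTransGen (fun x y => R x y ∨ R y x) a b) :
    (∀ w : W, ∃ v : W, R w v) ↔ (∃ w : W, ∃ w' : W, R w' w) := by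
  constructor
  · intro hSerial
    obtain ⟨w⟩ := ‹Nonempty W›
    obtain ⟨v, hwv⟩ := hSerial w
    exact ⟨v, w, hwv⟩
  · rintro ⟨w, w', hw'w⟩ x
    exact IsEuclidean.exists_rel_of_reflTransGen hEucl (hConn w' x) ⟨w, hw'w⟩
end

section
/- The formula ⟟p ∧ ⟟¬p ∧ ⋄≤₁⊤ of the modal language (⋄≥, ⟟) is globally satisfiable over arbitrary frames but has no finite global models. In relational terms: (i) there exist a set W, a binary relation R on W, and a subset P ⊆ W such that every w ∈ W has at most one R-successor, has some R-predecessor belonging to P, and has some R-predecessor not belonging to P; (ii) there is no such triple (W, R, P) with W finite and nonempty. -/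
/-!
A world has two distinct predecessors (one in `P`, one outside), while each predecessor has
only that world as successor; so choosing the two predecessors gives an injection `W ⊕ W ↪ W`,
impossible for finite nonempty `W`. On `ℕ` with `n ↦ n / 2` as successor map, the
predecessors of `n` are `2n` and `2n + 1`, of which exactly one is even.
-/

/-- `P` is a global model of `⟟p ∧ ⟟¬p ∧ ⋄≤₁⊤` on the frame `R`. -/
def IsGlobalModel {W : Type*} (R : W → W → Prop) (P : Set W) : Prop :=
  ∀ w : W,
    (∀ u v : W, R w u → R w v → u = v) ∧
    (∃ w' : W, R w' w ∧ w' ∈ P) ∧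
    (∃ w' : W, R w' w ∧ w' ∉ P)

theorem isGlobalModel_half_even : IsGlobalModel (fun m n : ℕ => n = m / 2) {n | Even n} :=
  fun n => ⟨fun _ _ hu hv => hu.trans hv.symm, ⟨2 * n, by omega, even_two_mul n⟩,
    ⟨2 * n + 1, by omega, Nat.not_even_iff_odd.mpr (odd_two_mul_add_one n)⟩⟩

theorem infinite_of_distinct_predecessors {W : Type*} [Nonempty W] {R : W → W → Prop}
    (hfun : ∀ w u v, R w u → R w v → u = v) {a b : W → W}
    (ha : ∀ w, R (a w) w) (hb : ∀ w, R (b w) w) (hab : ∀ w, a w ≠ b w) : Infinite W := by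
  have hinj : Function.Injective (Sum.elim a b) := by
    have same {w w' : W} {p : W → W} (hp : ∀ w, R (p w) w) {q : W → W} (hq : ∀ w, R (q w) w)
        (h : p w = q w') : w = w' :=
      hfun _ _ _ (hp w) (h ▸ hq w')
    rintro (w | w) (w' | w') h
    · exact congrArg _ (same ha ha h)
    · obtain rfl := same ha hb h
      exact absurd h (hab w)
    · obtain rfl := same hb ha h
      exact absurd h.symm (hab w)
    · exact congrArg _ (same hb hb h)
  refine not_finite_iff_infinite.mp fun _ => ?_
  have hcard := Nat.card_le_card_of_injective _ hinj
  rw [Nat.card_sum] at hcard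
  have : 0 < Nat.card W := Nat.card_pos
  omega

theorem IsGlobalModel.infinite {W : Type*} [Nonempty W] {R : W → W → Prop} {P : Set W}
    (h : IsGlobalModel R P) : Infinite W := by
  choose a ha haP using fun w => (h w).2.1
  choose b hb hbP using fun w => (h w).2.2
  exact infinite_of_distinct_predecessors (fun w => (h w).1) ha hb
    fun w hw => hbP w (hw ▸ haP w)

/-- The formula `⟟p ∧ ⟟¬p ∧ ⋄≤₁⊤` is globally satisfiable (over arbitrary
frames) but has no finite global models.  In relational terms, with `P` the set
of worlds where `p` holds: every world has at most one `R`-successor, some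
`R`-predecessor in `P`, and some `R`-predecessor outside `P`. -/
theorem no_global_finite_model_example :
    (∃ (W : Type) (R : W → W → Prop) (P : Set W), Nonempty W ∧
      ∀ w : W,
        (∀ u v : W, R w u → R w v → u = v) ∧
        (∃ w' : W, R w' w ∧ w' ∈ P) ∧
        (∃ w' : W, R w' w ∧ w' ∉ P)) ∧
    ¬ (∃ (W : Type) (R : W → W → Prop) (P : Set W), Finite W ∧ Nonempty W ∧
      ∀ w : W,
        (∀ u v : W, R w u → R w v → u = v) ∧
        (∃ w' : W, R w' w ∧ w' ∈ P) ∧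
        (∃ w' : W, R w' w ∧ w' ∉ P)) := by
  refine ⟨⟨ℕ, _, _, inferInstance, isGlobalModel_half_even⟩, ?_⟩
  rintro ⟨W, R, P, hfin, hne, hmodel⟩
  exact (show IsGlobalModel R P from hmodel).infinite.not_finite hfin
end
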